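/- arXiv:math/9703224 — 6 statements merged into one kernel-verified Lean document; each statement's English description precedes it below -/
import Mathlib

section
/- Let w = (u, v) be a pair of non-zero polynomials u(Y), v(Y) ∈ ℂ[Y] and let n = max{deg u, deg v}. Then for every y ∈ ℂ, max{|u(y)|, |v(y)|} ≥ 2^{-n} · min{ max{|u(0)|,|v(0)|}, inf_{η: u(η)=0} |v(η)|, inf_{η: v(η)=0} |u(η)| }. -/
/-!
Take a root `γ` in `u.roots + v.roots` nearest to `y`, say `u γ = 0`. Every zero `β` of `v` then satisfies
`|γ - β| ≤ |γ - y| + |y - β| ≤ 2 |y - β|`, so factoring `v` over its zeros gives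
`|v γ| ≤ 2 ^ deg v * |v y|`, while `M ≤ |v γ|` by hypothesis. If both root multisets are
empty, `u` and `v` are constant and the bound at `0` is the bound at `y`.
-/

open Polynomial

namespace Polynomial

variable {𝕜 : Type*} [NormedField 𝕜] [IsAlgClosed 𝕜]

theorem norm_eval_eq_norm_leadingCoeff_mul_prod_roots (p : 𝕜[X]) (x : 𝕜) :
    ‖p.eval x‖ = ‖p.leadingCoeff‖ * (p.roots.map fun β => ‖x - β‖).prod := by
  rw [(IsAlgClosed.splits p).eval_eq_prod_roots x, norm_mul, ← normHom_apply (_ : Multiset _).prod,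
    map_multiset_prod, Multiset.map_map]
  rfl

theorem norm_eval_le_two_pow_natDegree_mul_of_forall_roots {p : 𝕜[X]} {x y : 𝕜}
    (h : ∀ β ∈ p.roots, ‖y - x‖ ≤ ‖y - β‖) :
    ‖p.eval x‖ ≤ 2 ^ p.natDegree * ‖p.eval y‖ := by
  have hfactor : ∀ β ∈ p.roots, ‖x - β‖ ≤ 2 * ‖y - β‖ := fun β hβ =>
    calc ‖x - β‖ ≤ ‖x - y‖ + ‖y - β‖ := norm_sub_le_norm_sub_add_norm_sub x y β
      _ ≤ 2 * ‖y - β‖ := by rw [norm_sub_rev x y]; linarith [h β hβ]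
  rw [norm_eval_eq_norm_leadingCoeff_mul_prod_roots p x,
    norm_eval_eq_norm_leadingCoeff_mul_prod_roots p y]
  calc ‖p.leadingCoeff‖ * (p.roots.map fun β => ‖x - β‖).prod
      ≤ ‖p.leadingCoeff‖ * (p.roots.map fun β => 2 * ‖y - β‖).prod := by
        gcongr
        exact Multiset.prod_map_le_prod_map₀ _ _ (fun _ _ => norm_nonneg _) hfactor
    _ = 2 ^ p.natDegree * (‖p.leadingCoeff‖ * (p.roots.map fun β => ‖y - β‖).prod) := by
        rw [Multiset.prod_map_mul, Multiset.map_const', Multiset.prod_replicate,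
          IsAlgClosed.card_roots_eq_natDegree]
        ring

theorem eval_eq_eval_zero_of_roots_eq_zero {p : 𝕜[X]} (hp : p.roots = 0) (x : 𝕜) :
    p.eval x = p.eval 0 := by
  rw [IsAlgClosed.roots_eq_zero_iff.mp hp]
  simp only [eval_C]

end Polynomial

theorem stmt0_general (u v : Polynomial ℂ)
    (n : ℕ) (hn : n = max u.natDegree v.natDegree) (y : ℂ) (M : ℝ)
    (hM0 : M ≤ max ‖u.eval 0‖ ‖v.eval 0‖)
    (hMu : ∀ η : ℂ, u.eval η = 0 → M ≤ ‖v.eval η‖)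
    (hMv : ∀ η : ℂ, v.eval η = 0 → M ≤ ‖u.eval η‖) :
    ((2 : ℝ) ^ n)⁻¹ * M ≤ max ‖u.eval y‖ ‖v.eval y‖ := by
  rw [inv_mul_le_iff₀ (by positivity)]
  by_cases hroots : u.roots + v.roots = 0
  · obtain ⟨hu, hv⟩ := add_eq_zero.mp hroots
    calc M ≤ max ‖u.eval y‖ ‖v.eval y‖ := by
          rwa [eval_eq_eval_zero_of_roots_eq_zero hu, eval_eq_eval_zero_of_roots_eq_zero hv]
      _ ≤ 2 ^ n * max ‖u.eval y‖ ‖v.eval y‖ :=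
          le_mul_of_one_le_left (by positivity) (one_le_pow₀ one_le_two)
  obtain ⟨γ, hγ, hnearest⟩ := (u.roots + v.roots).toFinset.exists_min_image (fun β => ‖y - β‖)
    (Multiset.toFinset_nonempty.mpr hroots)
  have hnearest : ∀ β ∈ u.roots + v.roots, ‖y - γ‖ ≤ ‖y - β‖ := fun β hβ =>
    hnearest β (Multiset.mem_toFinset.mpr hβ)
  rcases Multiset.mem_add.mp (Multiset.mem_toFinset.mp hγ) with hγu | hγv
  · calc M ≤ ‖v.eval γ‖ := hMu γ (isRoot_of_mem_roots hγu)
      _ ≤ 2 ^ v.natDegree * ‖v.eval y‖ := norm_eval_le_two_pow_natDegree_mul_of_forall_roots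
          fun β hβ => hnearest β (Multiset.mem_add.mpr (.inr hβ))
      _ ≤ 2 ^ n * max ‖u.eval y‖ ‖v.eval y‖ := by
          gcongr
          · exact one_le_two
          · exact hn ▸ le_max_right _ _
          · exact le_max_right _ _
  · calc M ≤ ‖u.eval γ‖ := hMv γ (isRoot_of_mem_roots hγv)
      _ ≤ 2 ^ u.natDegree * ‖u.eval y‖ := norm_eval_le_two_pow_natDegree_mul_of_forall_roots
          fun β hβ => hnearest β (Multiset.mem_add.mpr (.inl hβ))
      _ ≤ 2 ^ n * max ‖u.eval y‖ ‖v.eval y‖ := by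
          gcongr
          · exact one_le_two
          · exact hn ▸ le_max_left _ _
          · exact le_max_left _ _

/-- Płoski's "lemma of the norm of a polynomial mapping" (Lemma 5.6):
for a pair `w = (u,v)` of non-zero one-variable complex polynomials and
`n = max (deg u) (deg v)`, for every `y`,
`max |u(y)| |v(y)| ≥ 2⁻ⁿ · min { max |u(0)| |v(0)|, inf_{u(η)=0} |v(η)|, inf_{v(η)=0} |u(η)| }`.
The minimum is expressed by quantifying over lower bounds `M` of the three quantities
(with the convention that an infimum over an empty zero set is `+∞`). -/
theorem stmt0 (u v : Polynomial ℂ) (hu : u ≠ 0) (hv : v ≠ 0)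
    (n : ℕ) (hn : n = max u.natDegree v.natDegree) (y : ℂ) (M : ℝ)
    (hM0 : M ≤ max ‖u.eval 0‖ ‖v.eval 0‖)
    (hMu : ∀ η : ℂ, u.eval η = 0 → M ≤ ‖v.eval η‖)
    (hMv : ∀ η : ℂ, v.eval η = 0 → M ≤ ‖u.eval η‖) :
    ((2 : ℝ) ^ n)⁻¹ * M ≤ max ‖u.eval y‖ ‖v.eval y‖ :=
  stmt0_general u v n hn y M hM0 hMu hMv
end

section
/- Let p, q₁, …, q_k be complex power series in 1/T convergent in a neighbourhood of infinity, with deg p ≤ d and deg q_j > d for all j, where d is a fixed positive integer. Then for any c > 0 there exists R > 0 such that for all t with |t| > R and all y ∈ ℂ with |y| ≤ c·|t|^d, one has ∏_{i=1}^k |y − q_i(t)| ≥ 2^{-k} · ∏_{i=1}^k |p(t) − q_i(t)|. -/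
open Filter

/-- Proposition 5.1. `p, q₁, …, q_k` are convergent Laurent series in `1/T` near infinity,
represented by their sum functions together with their asymptotic behaviour at infinity:
`deg p ≤ d` is expressed by `‖p t‖ ≤ Cp * ‖t‖^d` eventually, and `deg q i = m i > d`
by `q i t / t ^ m i → q0 i ≠ 0` at infinity. Then for every `c > 0` there is a
neighbourhood `{‖t‖ > R}` of infinity on which, for all `y` with `‖y‖ ≤ c‖t‖^d`,
`∏ ‖y − qᵢ(t)‖ ≥ 2⁻ᵏ ∏ ‖p(t) − qᵢ(t)‖`. -/
theorem stmt1 (d : ℤ) (hd : 1 ≤ d) (k : ℕ) (p : ℂ → ℂ) (q : Fin k → ℂ → ℂ)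
    (Cp : ℝ)
    (hp : ∀ᶠ t in Bornology.cobounded ℂ, ‖p t‖ ≤ Cp * ‖t‖ ^ d)
    (m : Fin k → ℤ) (hm : ∀ i, d < m i)
    (q0 : Fin k → ℂ) (hq0 : ∀ i, q0 i ≠ 0)
    (hq : ∀ i, Tendsto (fun t : ℂ => q i t / t ^ m i) (Bornology.cobounded ℂ) (nhds (q0 i))) :
    ∀ c : ℝ, 0 < c → ∃ R : ℝ, 0 < R ∧ ∀ t : ℂ, R < ‖t‖ → ∀ y : ℂ, ‖y‖ ≤ c * ‖t‖ ^ d →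
      ((2 : ℝ) ^ k)⁻¹ * ∏ i, ‖p t - q i t‖ ≤ ∏ i, ‖y - q i t‖ := by
  intro c hc
  have key : ∀ i : Fin k, ∀ᶠ t in Bornology.cobounded ℂ,
      (2 * c + |Cp|) * ‖t‖ ^ d ≤ ‖q i t‖ := by
    intro i
    have hq0pos : 0 < ‖q0 i‖ := norm_pos_iff.2 (hq0 i)
    have h1 : ∀ᶠ t in Bornology.cobounded ℂ, ‖q0 i‖ / 2 ≤ ‖q i t / t ^ m i‖ :=
      ((hq i).norm.eventually (eventually_gt_nhds (half_lt_self hq0pos))).mono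
        fun t ht => ht.le
    have h2 : ∀ᶠ t in Bornology.cobounded ℂ,
        max 1 ((2 * c + |Cp|) / (‖q0 i‖ / 2)) ≤ ‖t‖ :=
      eventually_cobounded_le_norm _
    filter_upwards [h1, h2] with t ht1 ht2
    have ht1' : (1 : ℝ) ≤ ‖t‖ := le_trans (le_max_left _ _) ht2
    have htpos : (0 : ℝ) < ‖t‖ := lt_of_lt_of_le one_pos ht1'
    have htne : t ≠ 0 := norm_pos_iff.1 htpos
    have hQ : ‖q0 i‖ / 2 * ‖t‖ ^ m i ≤ ‖q i t‖ := by
      rw [norm_div, norm_zpow, div_le_div_iff₀ (by positivity) (zpow_pos htpos _)] at ht1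
      calc ‖q0 i‖ / 2 * ‖t‖ ^ m i = ‖q0 i‖ / 2 * ‖t‖ ^ m i := rfl
        _ ≤ ‖q i t‖ := by nlinarith [zpow_pos htpos (m i)]
    refine le_trans ?_ hQ
    have hsplit : ‖t‖ ^ m i = ‖t‖ ^ d * ‖t‖ ^ (m i - d) := by
      rw [← zpow_add₀ (ne_of_gt htpos)]; ring_nf
    rw [hsplit]
    have h3 : ‖t‖ ≤ ‖t‖ ^ (m i - d) := by
      calc ‖t‖ = ‖t‖ ^ (1 : ℤ) := (zpow_one _).symm
        _ ≤ ‖t‖ ^ (m i - d) := zpow_le_zpow_right₀ ht1' (by have := hm i; omega)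
    have h4 : 2 * c + |Cp| ≤ ‖q0 i‖ / 2 * ‖t‖ := by
      have h5 := le_trans (le_max_right 1 ((2 * c + |Cp|) / (‖q0 i‖ / 2))) ht2
      rw [div_le_iff₀ (by positivity)] at h5
      linarith [mul_comm ‖t‖ (‖q0 i‖ / 2)]
    have hX : (0 : ℝ) < ‖t‖ ^ d := zpow_pos htpos d
    calc (2 * c + |Cp|) * ‖t‖ ^ d ≤ (‖q0 i‖ / 2 * ‖t‖) * ‖t‖ ^ d :=
        mul_le_mul_of_nonneg_right h4 hX.le
      _ ≤ (‖q0 i‖ / 2 * ‖t‖ ^ (m i - d)) * ‖t‖ ^ d :=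
        mul_le_mul_of_nonneg_right (mul_le_mul_of_nonneg_left h3 (by positivity)) hX.le
      _ = ‖q0 i‖ / 2 * (‖t‖ ^ d * ‖t‖ ^ (m i - d)) := by ring
  have all : ∀ᶠ t in Bornology.cobounded ℂ,
      (‖p t‖ ≤ Cp * ‖t‖ ^ d ∧ ∀ i, (2 * c + |Cp|) * ‖t‖ ^ d ≤ ‖q i t‖) :=
    hp.and (eventually_all.2 key)
  rw [← comap_norm_atTop, eventually_comap, eventually_atTop] at all
  obtain ⟨R₀, hR₀⟩ := all
  refine ⟨max R₀ 1, lt_of_lt_of_le one_pos (le_max_right _ _), fun t ht y hy => ?_⟩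
  obtain ⟨hpt, hqt⟩ := hR₀ ‖t‖ (le_trans (le_max_left _ _) ht.le) t rfl
  have htpos : (0 : ℝ) < ‖t‖ := lt_of_le_of_lt (le_of_lt (lt_of_lt_of_le one_pos (le_max_right _ _))) ht
  have hX : (0 : ℝ) < ‖t‖ ^ d := zpow_pos htpos d
  have step : ∀ i : Fin k, (2 : ℝ)⁻¹ * ‖p t - q i t‖ ≤ ‖y - q i t‖ := by
    intro i
    have h1 : ‖p t - q i t‖ ≤ ‖p t‖ + ‖q i t‖ := norm_sub_le _ _
    have h2 : ‖q i t‖ - ‖y‖ ≤ ‖y - q i t‖ := by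
      have := norm_sub_norm_le (q i t) y
      rw [norm_sub_rev] at this
      linarith [abs_le.1 (abs_norm_sub_norm_le (y) (q i t))]
    have h3 := hqt i
    have h4 : Cp ≤ |Cp| := le_abs_self Cp
    nlinarith [norm_nonneg (p t)]
  calc ((2 : ℝ) ^ k)⁻¹ * ∏ i, ‖p t - q i t‖
      = ∏ i : Fin k, (2 : ℝ)⁻¹ * ‖p t - q i t‖ := by
        rw [Finset.prod_mul_distrib, Finset.prod_const, Finset.card_univ, Fintype.card_fin,
          ← inv_pow]
    _ ≤ ∏ i, ‖y - q i t‖ :=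
        Finset.prod_le_prod (fun i _ => by positivity) fun i _ => step i
end

section
/- For H = (1 + X⁴ − Y², X² − Y) : ℂ² → ℂ², the Łojasiewicz exponent at infinity satisfies ℓ_∞(H) = −1, ℓ_∞(H, X) = −2 and ℓ_∞(H, Y) = −1; in particular the inequality ℓ_∞(H) ≥ min{ℓ_∞(H,X), ℓ_∞(H,Y)} can be strict. -/
noncomputable section

/-- the norm `|z| = max{|x|,|y|}` on `ℂ²`. -/
def pnorm (z : ℂ × ℂ) : ℝ := max ‖z.1‖ ‖z.2‖

/-- The set of Łojasiewicz exponents of `H` at infinity, relative to a subset `A`: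
reals `l` such that `|H z| ≥ c |z|^l` for `z ∈ A` with `|z|` sufficiently large. -/
def lojaSetOn (H : ℂ × ℂ → ℂ × ℂ) (A : Set (ℂ × ℂ)) : Set ℝ :=
  {l | ∃ c : ℝ, 0 < c ∧ ∃ R : ℝ, ∀ z ∈ A, R ≤ pnorm z → c * pnorm z ^ l ≤ pnorm (H z)}

/-- the Łojasiewicz exponent `ℓ_∞(H, A)` as an extended real (`sSup ∅ = -∞`). -/
def lojaOn (H : ℂ × ℂ → ℂ × ℂ) (A : Set (ℂ × ℂ)) : EReal :=
  sSup ((fun l : ℝ => (l : EReal)) '' lojaSetOn H A)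

/-- the Łojasiewicz exponent `ℓ_∞(H)` at infinity. -/
def loja (H : ℂ × ℂ → ℂ × ℂ) : EReal := lojaOn H Set.univ

/-- exponents relative to the variable `X` and a subset `A`:
`|H (x,y)| ≥ c |x|^l` for `(x,y) ∈ A` with `|x|` sufficiently large. -/
def lojaSetXOn (H : ℂ × ℂ → ℂ × ℂ) (A : Set (ℂ × ℂ)) : Set ℝ :=
  {l | ∃ c : ℝ, 0 < c ∧ ∃ R : ℝ, ∀ z ∈ A, R ≤ ‖z.1‖ → c * ‖z.1‖ ^ l ≤ pnorm (H z)}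

/-- `ℓ_∞(H, A, X)`. -/
def lojaXOn (H : ℂ × ℂ → ℂ × ℂ) (A : Set (ℂ × ℂ)) : EReal :=
  sSup ((fun l : ℝ => (l : EReal)) '' lojaSetXOn H A)

/-- exponents relative to the variable `Y` and a subset `A`. -/
def lojaSetYOn (H : ℂ × ℂ → ℂ × ℂ) (A : Set (ℂ × ℂ)) : Set ℝ :=
  {l | ∃ c : ℝ, 0 < c ∧ ∃ R : ℝ, ∀ z ∈ A, R ≤ ‖z.2‖ → c * ‖z.2‖ ^ l ≤ pnorm (H z)}

/-- `ℓ_∞(H, A, Y)`. -/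
def lojaYOn (H : ℂ × ℂ → ℂ × ℂ) (A : Set (ℂ × ℂ)) : EReal :=
  sSup ((fun l : ℝ => (l : EReal)) '' lojaSetYOn H A)

/-- `ℓ_∞(H, X)`. -/
def lojaX (H : ℂ × ℂ → ℂ × ℂ) : EReal := lojaXOn H Set.univ

/-- `ℓ_∞(H, Y)`. -/
def lojaY (H : ℂ × ℂ → ℂ × ℂ) : EReal := lojaYOn H Set.univ

/-- the polynomial mapping `ℂ² → ℂ²` determined by a pair of polynomials. -/
def Hmap (f g : MvPolynomial (Fin 2) ℂ) : ℂ × ℂ → ℂ × ℂ :=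
  fun z => (MvPolynomial.eval ![z.1, z.2] f, MvPolynomial.eval ![z.1, z.2] g)

open Filter

section MyAux

lemma my_inv_small {p : ℝ} (hp : 10 ≤ p) : p⁻¹ ≤ 1/10 := by
  rw [← one_div]
  exact one_div_le_one_div_of_le (by norm_num) hp

lemma my_core (x y : ℂ) (h : ‖x ^ 2 - y‖ * ‖x ^ 2 + y‖ ≤ 1 / 2) :
    (1:ℝ)/2 ≤ ‖1 + x ^ 4 - y ^ 2‖ := by
  have hfac : 1 + x ^ 4 - y ^ 2 = 1 + (x ^ 2 - y) * (x ^ 2 + y) := by ring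
  rw [hfac]
  have h1 : ‖(1:ℂ)‖ ≤ ‖1 + (x ^ 2 - y) * (x ^ 2 + y)‖ + ‖(x ^ 2 - y) * (x ^ 2 + y)‖ := by
    have h2 := norm_sub_le (1 + (x ^ 2 - y) * (x ^ 2 + y)) ((x ^ 2 - y) * (x ^ 2 + y))
    rwa [add_sub_cancel_right] at h2
  rw [norm_mul] at h1
  simp only [norm_one] at h1
  linarith

lemma my_workhorse (x y : ℂ) (p : ℝ) (hp : 10 ≤ p) (hsum : ‖x‖ ^ 2 + ‖y‖ ≤ 3 * p)
    (hg : ‖x ^ 2 - y‖ < 1/6 * p⁻¹) : 1/6 * p⁻¹ ≤ ‖1 + x ^ 4 - y ^ 2‖ := by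
  have hp0 : (0:ℝ) < p := by linarith
  have hpi : p⁻¹ ≤ 1/10 := my_inv_small hp
  have hq : ‖x ^ 2 + y‖ ≤ 3 * p := by
    calc ‖x ^ 2 + y‖ ≤ ‖x ^ 2‖ + ‖y‖ := norm_add_le _ _
    _ = ‖x‖ ^ 2 + ‖y‖ := by rw [norm_pow]
    _ ≤ 3 * p := hsum
  have hprod : ‖x ^ 2 - y‖ * ‖x ^ 2 + y‖ ≤ 1/2 := by
    have h1 : ‖x ^ 2 - y‖ * ‖x ^ 2 + y‖ ≤ ‖x ^ 2 - y‖ * (3 * p) :=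
      mul_le_mul_of_nonneg_left hq (norm_nonneg _)
    have h2 : ‖x ^ 2 - y‖ * (3 * p) ≤ (1/6 * p⁻¹) * (3 * p) :=
      mul_le_mul_of_nonneg_right hg.le (by linarith)
    have h3 : (1/6 * p⁻¹) * (3 * p) = 1/2 := by field_simp; ring
    linarith
  have hcore := my_core x y hprod
  have : 1/6 * p⁻¹ ≤ 1/2 := by linarith
  linarith

lemma my_gl1 (x y : ℂ) : ‖x‖ ^ 2 - ‖y‖ ≤ ‖x ^ 2 - y‖ := by
  have := norm_sub_norm_le (x ^ 2) y
  rwa [norm_pow] at this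

lemma my_gl2 (x y : ℂ) : ‖y‖ - ‖x‖ ^ 2 ≤ ‖x ^ 2 - y‖ := by
  have h := norm_sub_norm_le y (x ^ 2)
  rw [norm_pow] at h
  have h2 : ‖y - x ^ 2‖ = ‖x ^ 2 - y‖ := norm_sub_rev _ _
  linarith

lemma my_witness (t : ℝ) (ht : 1 ≤ t) :
    ∃ z : ℂ × ℂ, ‖z.1‖ = t ∧ ‖z.2‖ = Real.sqrt (1 + t ^ 4) ∧
      pnorm z = Real.sqrt (1 + t ^ 4) ∧
      pnorm ((fun z : ℂ × ℂ => (1 + z.1 ^ 4 - z.2 ^ 2, z.1 ^ 2 - z.2)) z)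
        = Real.sqrt (1 + t ^ 4) - t ^ 2 ∧
      t ^ 2 ≤ Real.sqrt (1 + t ^ 4) ∧
      (Real.sqrt (1 + t ^ 4) - t ^ 2) * (Real.sqrt (1 + t ^ 4) + t ^ 2) = 1 := by
  set s := Real.sqrt (1 + t ^ 4) with hs
  have h0 : (0:ℝ) ≤ 1 + t ^ 4 := by positivity
  have hs2 : s ^ 2 = 1 + t ^ 4 := Real.sq_sqrt h0
  have hs0 : 0 ≤ s := Real.sqrt_nonneg _
  have hts : t ^ 2 ≤ s := by
    nlinarith [sq_nonneg (s - t ^ 2), sq_nonneg (s + t ^ 2)]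
  have ht2 : t ≤ t ^ 2 := by nlinarith
  have hprod : (s - t ^ 2) * (s + t ^ 2) = 1 := by nlinarith
  refine ⟨((t:ℂ), (s:ℂ)), ?_, ?_, ?_, ?_, hts, hprod⟩
  · simp [Complex.norm_real, abs_of_nonneg (by linarith : (0:ℝ) ≤ t)]
  · simp [Complex.norm_real, abs_of_nonneg hs0]
  · simp only [pnorm]
    rw [Complex.norm_real, Complex.norm_real, Real.norm_eq_abs, Real.norm_eq_abs,
      abs_of_nonneg (by linarith : (0:ℝ) ≤ t), abs_of_nonneg hs0]
    exact max_eq_right (by linarith)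
  · simp only [pnorm]
    have hf : 1 + ((t:ℝ):ℂ) ^ 4 - ((s:ℝ):ℂ) ^ 2 = 0 := by
      have hc : ((s:ℝ):ℂ) ^ 2 = ((s ^ 2 : ℝ) : ℂ) := by push_cast; ring
      rw [hc, hs2]; push_cast; ring
    have hg : ((t:ℝ):ℂ) ^ 2 - ((s:ℝ):ℂ) = (((t ^ 2 - s : ℝ)) : ℂ) := by push_cast; ring
    simp only [hf, hg, norm_zero, Complex.norm_real]
    rw [Real.norm_eq_abs, abs_of_nonpos (by linarith : t ^ 2 - s ≤ 0)]
    rw [max_eq_right (by linarith : (0:ℝ) ≤ -(t ^ 2 - s))]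
    ring

end MyAux

section MyAux2

abbrev myH : ℂ × ℂ → ℂ × ℂ := fun z : ℂ × ℂ => (1 + z.1 ^ 4 - z.2 ^ 2, z.1 ^ 2 - z.2)

lemma my_memLoja : (-1 : ℝ) ∈ lojaSetOn myH Set.univ := by
  refine ⟨1/6, by norm_num, 10, ?_⟩
  rintro ⟨x, y⟩ - hR
  simp only [pnorm] at hR ⊢
  set p := max ‖x‖ ‖y‖ with hpdef
  rw [Real.rpow_neg_one]
  rcases le_or_gt (1/6 * p⁻¹) ‖x ^ 2 - y‖ with h | h
  · exact le_trans h (le_max_right _ _)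
  · refine le_trans ?_ (le_max_left _ _)
    have hp0 : (0:ℝ) < p := by linarith
    have hpi : p⁻¹ ≤ 1/10 := my_inv_small hR
    have hgl := my_gl1 x y
    have hy1 : 1 ≤ ‖y‖ := by
      by_contra hy
      push_neg at hy
      have hx : 10 ≤ ‖x‖ := by
        by_contra hx
        push_neg at hx
        have : p < 10 := max_lt hx (by linarith)
        linarith
      nlinarith
    have hxb : ‖x‖ ^ 2 ≤ ‖y‖ + 1 := by nlinarith
    have hyp : ‖y‖ ≤ p := le_max_right _ _
    exact my_workhorse x y p hR (by linarith) h

lemma my_memLojaY : (-1 : ℝ) ∈ lojaSetYOn myH Set.univ := by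
  refine ⟨1/6, by norm_num, 10, ?_⟩
  rintro ⟨x, y⟩ - hR
  simp only [pnorm]
  simp only at hR
  set p := ‖y‖ with hpdef
  rw [Real.rpow_neg_one]
  rcases le_or_gt (1/6 * p⁻¹) ‖x ^ 2 - y‖ with h | h
  · exact le_trans h (le_max_right _ _)
  · refine le_trans ?_ (le_max_left _ _)
    have hp0 : (0:ℝ) < p := by linarith
    have hpi : p⁻¹ ≤ 1/10 := my_inv_small hR
    have hgl := my_gl1 x y
    have hxb : ‖x‖ ^ 2 ≤ p + 1 := by nlinarith
    exact my_workhorse x y p hR (by linarith) h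

lemma my_memLojaX : (-2 : ℝ) ∈ lojaSetXOn myH Set.univ := by
  refine ⟨1/6, by norm_num, 10, ?_⟩
  rintro ⟨x, y⟩ - hR
  simp only [pnorm]
  simp only at hR
  have hrw : ‖x‖ ^ (-2 : ℝ) = (‖x‖ ^ 2)⁻¹ := by
    rw [Real.rpow_neg (norm_nonneg _)]
    congr 1
    rw [show ((2:ℝ)) = ((2:ℕ):ℝ) by norm_num, Real.rpow_natCast]
  rw [hrw]
  set q := ‖x‖ ^ 2 with hqdef
  have hq10 : (10:ℝ) ≤ q := by nlinarith
  rcases le_or_gt (1/6 * q⁻¹) ‖x ^ 2 - y‖ with h | h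
  · exact le_trans h (le_max_right _ _)
  · refine le_trans ?_ (le_max_left _ _)
    have hq0 : (0:ℝ) < q := by linarith
    have hqi : q⁻¹ ≤ 1/10 := my_inv_small hq10
    have hgl := my_gl2 x y
    have hyb : ‖y‖ ≤ q + 1 := by nlinarith
    exact my_workhorse x y q hq10 (by linarith) h

lemma my_upperLoja : ∀ l ∈ lojaSetOn myH Set.univ, l ≤ (-1 : ℝ) := by
  rintro l ⟨c, hc, R, hb⟩
  by_contra hl
  push_neg at hl
  have he : (0:ℝ) < l + 1 := by linarith
  have hev : ∀ᶠ t : ℝ in atTop, t ^ (-(l+1)) < c :=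
    (tendsto_rpow_neg_atTop he).eventually_lt_const hc
  obtain ⟨t, ht⟩ := (hev.and (eventually_ge_atTop (max 1 R))).exists
  have ht1 : 1 ≤ t := le_trans (le_max_left _ _) ht.2
  have ht0 : (0:ℝ) < t := by linarith
  obtain ⟨z, hz1, hz2, hzp, hzH, hts, hprod⟩ := my_witness t ht1
  set s := Real.sqrt (1 + t ^ 4) with hs
  have ht2 : t ≤ t ^ 2 := by nlinarith
  have hsge : t ≤ s := le_trans ht2 hts
  have hs0 : (0:ℝ) < s := by linarith
  have hR : R ≤ pnorm z := by
    rw [hzp]; exact le_trans (le_trans (le_max_right 1 R) ht.2) hsge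
  have hb' := hb z (Set.mem_univ z) hR
  rw [hzp, hzH] at hb'
  have h1 : s - t ^ 2 ≤ s⁻¹ := by
    have h3 : (0:ℝ) < s + t ^ 2 := by nlinarith
    have h4 : s - t ^ 2 = (s + t ^ 2)⁻¹ := by
      field_simp
      linarith [hprod]
    rw [h4, ← one_div, ← one_div]
    exact one_div_le_one_div_of_le hs0 (by nlinarith)
  have h4 : c * s ^ l ≤ s⁻¹ := le_trans hb' h1
  have h5 : c ≤ s ^ (-(l+1)) := by
    have hpow : (0:ℝ) ≤ s ^ (-l) := (Real.rpow_pos_of_pos hs0 _).le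
    have h6 := mul_le_mul_of_nonneg_right h4 hpow
    rw [mul_assoc, ← Real.rpow_add hs0, add_neg_cancel, Real.rpow_zero, mul_one] at h6
    have h7 : s⁻¹ * s ^ (-l) = s ^ (-(l+1)) := by
      rw [← Real.rpow_neg_one s, ← Real.rpow_add hs0]
      rw [show (-1:ℝ) + -l = -(l+1) by ring]
    rwa [h7] at h6
  have h8 : s ^ (-(l+1)) ≤ t ^ (-(l+1)) :=
    Real.rpow_le_rpow_of_nonpos ht0 hsge (by linarith)
  linarith [ht.1]

lemma my_upperLojaY : ∀ l ∈ lojaSetYOn myH Set.univ, l ≤ (-1 : ℝ) := by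
  rintro l ⟨c, hc, R, hb⟩
  by_contra hl
  push_neg at hl
  have he : (0:ℝ) < l + 1 := by linarith
  have hev : ∀ᶠ t : ℝ in atTop, t ^ (-(l+1)) < c :=
    (tendsto_rpow_neg_atTop he).eventually_lt_const hc
  obtain ⟨t, ht⟩ := (hev.and (eventually_ge_atTop (max 1 R))).exists
  have ht1 : 1 ≤ t := le_trans (le_max_left _ _) ht.2
  have ht0 : (0:ℝ) < t := by linarith
  obtain ⟨z, hz1, hz2, hzp, hzH, hts, hprod⟩ := my_witness t ht1
  set s := Real.sqrt (1 + t ^ 4) with hs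
  have ht2 : t ≤ t ^ 2 := by nlinarith
  have hsge : t ≤ s := le_trans ht2 hts
  have hs0 : (0:ℝ) < s := by linarith
  have hR : R ≤ ‖z.2‖ := by
    rw [hz2]; exact le_trans (le_trans (le_max_right 1 R) ht.2) hsge
  have hb' := hb z (Set.mem_univ z) hR
  rw [hz2, hzH] at hb'
  have h1 : s - t ^ 2 ≤ s⁻¹ := by
    have h3 : (0:ℝ) < s + t ^ 2 := by nlinarith
    have h4 : s - t ^ 2 = (s + t ^ 2)⁻¹ := by
      field_simp
      linarith [hprod]
    rw [h4, ← one_div, ← one_div]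
    exact one_div_le_one_div_of_le hs0 (by nlinarith)
  have h4 : c * s ^ l ≤ s⁻¹ := le_trans hb' h1
  have h5 : c ≤ s ^ (-(l+1)) := by
    have hpow : (0:ℝ) ≤ s ^ (-l) := (Real.rpow_pos_of_pos hs0 _).le
    have h6 := mul_le_mul_of_nonneg_right h4 hpow
    rw [mul_assoc, ← Real.rpow_add hs0, add_neg_cancel, Real.rpow_zero, mul_one] at h6
    have h7 : s⁻¹ * s ^ (-l) = s ^ (-(l+1)) := by
      rw [← Real.rpow_neg_one s, ← Real.rpow_add hs0]
      rw [show (-1:ℝ) + -l = -(l+1) by ring]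
    rwa [h7] at h6
  have h8 : s ^ (-(l+1)) ≤ t ^ (-(l+1)) :=
    Real.rpow_le_rpow_of_nonpos ht0 hsge (by linarith)
  linarith [ht.1]

lemma my_upperLojaX : ∀ l ∈ lojaSetXOn myH Set.univ, l ≤ (-2 : ℝ) := by
  rintro l ⟨c, hc, R, hb⟩
  by_contra hl
  push_neg at hl
  have he : (0:ℝ) < l + 2 := by linarith
  have hev : ∀ᶠ t : ℝ in atTop, t ^ (-(l+2)) < 2 * c :=
    (tendsto_rpow_neg_atTop he).eventually_lt_const (by linarith)
  obtain ⟨t, ht⟩ := (hev.and (eventually_ge_atTop (max 1 R))).exists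
  have ht1 : 1 ≤ t := le_trans (le_max_left _ _) ht.2
  have ht0 : (0:ℝ) < t := by linarith
  obtain ⟨z, hz1, hz2, hzp, hzH, hts, hprod⟩ := my_witness t ht1
  set s := Real.sqrt (1 + t ^ 4) with hs
  have ht2 : t ≤ t ^ 2 := by nlinarith
  have hs0 : (0:ℝ) < s := by nlinarith
  have hR : R ≤ ‖z.1‖ := by
    rw [hz1]; exact le_trans (le_max_right 1 R) ht.2
  have hb' := hb z (Set.mem_univ z) hR
  rw [hz1, hzH] at hb'
  have h1 : s - t ^ 2 ≤ (2 * t ^ 2)⁻¹ := by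
    have h3 : (0:ℝ) < s + t ^ 2 := by nlinarith
    have h4 : s - t ^ 2 = (s + t ^ 2)⁻¹ := by
      field_simp
      linarith [hprod]
    rw [h4, ← one_div, ← one_div]
    exact one_div_le_one_div_of_le (by positivity) (by nlinarith)
  have h4 : c * t ^ l ≤ (2 * t ^ 2)⁻¹ := le_trans hb' h1
  have h5 : c ≤ 1/2 * t ^ (-(l+2)) := by
    have hpow : (0:ℝ) ≤ t ^ (-l) := (Real.rpow_pos_of_pos ht0 _).le
    have h6 := mul_le_mul_of_nonneg_right h4 hpow
    rw [mul_assoc, ← Real.rpow_add ht0, add_neg_cancel, Real.rpow_zero, mul_one] at h6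
    have h7 : (2 * t ^ 2)⁻¹ * t ^ (-l) = 1/2 * t ^ (-(l+2)) := by
      have e1 : t ^ ((-2):ℝ) = (t ^ 2)⁻¹ := by
        rw [Real.rpow_neg ht0.le]
        congr 1
        rw [show ((2:ℝ)) = ((2:ℕ):ℝ) by norm_num, Real.rpow_natCast]
      rw [mul_inv, ← e1, mul_assoc, ← Real.rpow_add ht0,
        show (-2:ℝ) + -l = -(l+2) by ring]
      rw [show (2:ℝ)⁻¹ = 1/2 by norm_num]
    rwa [h7] at h6
  linarith [ht.1]

lemma my_supEq (S : Set ℝ) (a : ℝ) (ha : a ∈ S) (hub : ∀ l ∈ S, l ≤ a) :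
    sSup ((fun l : ℝ => (l : EReal)) '' S) = (a : EReal) := by
  apply le_antisymm
  · apply sSup_le
    rintro x ⟨l, hl, rfl⟩
    simp only []
    exact_mod_cast hub l hl
  · exact le_sSup ⟨a, ha, rfl⟩

end MyAux2

/-- For `H = (1 + X⁴ − Y², X² − Y)` one has `ℓ_∞(H) = −1`, `ℓ_∞(H,X) = −2`,
`ℓ_∞(H,Y) = −1`; in particular `ℓ_∞(H) > min{ℓ_∞(H,X), ℓ_∞(H,Y)}`, so the inequality
(5) can be strict. -/
theorem stmt5 (H : ℂ × ℂ → ℂ × ℂ)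
    (hH : H = fun z : ℂ × ℂ => (1 + z.1 ^ 4 - z.2 ^ 2, z.1 ^ 2 - z.2)) :
    loja H = (-1 : EReal) ∧ lojaX H = (-2 : EReal) ∧ lojaY H = (-1 : EReal) ∧
      min (lojaX H) (lojaY H) < loja H := by
  subst hH
  have e1 : loja myH = ((-1:ℝ):EReal) :=
    my_supEq (lojaSetOn myH Set.univ) (-1) my_memLoja my_upperLoja
  have e2 : lojaX myH = ((-2:ℝ):EReal) :=
    my_supEq (lojaSetXOn myH Set.univ) (-2) my_memLojaX my_upperLojaX
  have e3 : lojaY myH = ((-1:ℝ):EReal) :=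
    my_supEq (lojaSetYOn myH Set.univ) (-1) my_memLojaY my_upperLojaY
  have c1 : ((-1:ℝ):EReal) = (-1:EReal) := by
    have h1 : ((1:ℝ):EReal) = (1:EReal) := by exact_mod_cast rfl
    rw [show (-1:ℝ) = -(1:ℝ) by norm_num, EReal.coe_neg, h1]
  have c2 : ((-2:ℝ):EReal) = (-2:EReal) := by
    have h2 : ((2:ℝ):EReal) = (2:EReal) := by exact_mod_cast rfl
    rw [show (-2:ℝ) = -(2:ℝ) by norm_num, EReal.coe_neg, h2]
  refine ⟨e1.trans c1, e2.trans c2, e3.trans c1, ?_⟩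
  show min (lojaX myH) (lojaY myH) < loja myH
  rw [e1, e2, e3, min_eq_left (EReal.coe_le_coe_iff.mpr (by norm_num))]
  exact EReal.coe_lt_coe_iff.mpr (by norm_num)
end
end

section
/- Let h ∈ ℂ[X,Y] be a polynomial without constant term, with both partial derivatives ∂h/∂X and ∂h/∂Y non-zero, not divisible by X² and not divisible by Y². If each of the right and top Newton polygons of h is empty or consists only of its exceptional segment, then h(X,Y) = aX + bY + cXY for some a, b, c ∈ ℂ with ab ≠ 0 or c ≠ 0. -/
open scoped Classical

noncomputable section

/-- A (candidate) segment in the plane, given by its two lattice endpoints. -/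
structure Seg where
  P : ℕ × ℕ
  Q : ℕ × ℕ

/-- the support of a polynomial in two variables, as a finite set of pairs `(α,β)`. -/
def supp (h : MvPolynomial (Fin 2) ℂ) : Finset (ℕ × ℕ) :=
  h.support.image fun d => (d 0, d 1)

/-- the coefficient `h_{αβ}` of `X^α Y^β` in `h`. -/
def coeff2 (h : MvPolynomial (Fin 2) ℂ) (p : ℕ × ℕ) : ℂ :=
  MvPolynomial.coeff (Finsupp.single 0 p.1 + Finsupp.single 1 p.2) h

/-- the linear functional whose level lines are parallel to `S`, normalized so that
(for a right-polygon segment, `S.P.2 < S.Q.2`) its gradient points to the right. -/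
def lfun (S : Seg) (v : ℕ × ℕ) : ℤ :=
  ((S.Q.2 : ℤ) - S.P.2) * v.1 - ((S.Q.1 : ℤ) - S.P.1) * v.2

/-- the linear functional whose level lines are parallel to `S`, normalized so that
(for a top-polygon segment, `S.P.1 < S.Q.1`) its gradient points upwards. -/
def gfun (S : Seg) (v : ℕ × ℕ) : ℤ :=
  ((S.Q.1 : ℤ) - S.P.1) * v.2 - ((S.Q.2 : ℤ) - S.P.2) * v.1

/-- `v` lies on the segment with endpoints `S.P` and `S.Q`
(collinear and inside the bounding box). -/
def OnSeg (S : Seg) (v : ℕ × ℕ) : Prop :=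
  lfun S v = lfun S S.P ∧
  min S.P.1 S.Q.1 ≤ v.1 ∧ v.1 ≤ max S.P.1 S.Q.1 ∧
  min S.P.2 S.Q.2 ≤ v.2 ∧ v.2 ≤ max S.P.2 S.Q.2

/-- `S` is a segment (one-dimensional boundary face) of the right Newton polygon of `h`:
its endpoints (ordered by increasing ordinate) are in the support, the whole support lies
weakly to the left of the line through `S` (the supporting line has outward normal with
positive first coordinate), and `S` is a maximal face: every support point on this line has
ordinate between those of the endpoints. Such segments are exactly the boundary faces on
the right of the Newton diagram joining the lines `β = ord_Y h` and `β = deg_Y h`. -/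
def RightSeg (h : MvPolynomial (Fin 2) ℂ) (S : Seg) : Prop :=
  S.P ∈ supp h ∧ S.Q ∈ supp h ∧ S.P.2 < S.Q.2 ∧
  (∀ v ∈ supp h, lfun S v ≤ lfun S S.P) ∧
  (∀ v ∈ supp h, lfun S v = lfun S S.P → S.P.2 ≤ v.2 ∧ v.2 ≤ S.Q.2)

/-- `S` is a segment of the top Newton polygon of `h` (endpoints ordered by increasing
abscissa; the supporting line has outward normal with positive second coordinate). -/
def TopSeg (h : MvPolynomial (Fin 2) ℂ) (S : Seg) : Prop :=
  S.P ∈ supp h ∧ S.Q ∈ supp h ∧ S.P.1 < S.Q.1 ∧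
  (∀ v ∈ supp h, gfun S v ≤ gfun S S.P) ∧
  (∀ v ∈ supp h, gfun S v = gfun S S.P → S.P.1 ≤ v.1 ∧ v.1 ≤ S.Q.1)

/-- `σ(S)` for a right-polygon segment (endpoints ordered by increasing ordinate):
`0` if `S` is vertical, otherwise minus the sign of the slope of `S`. -/
def sigmaR (S : Seg) : ℤ :=
  if S.P.1 = S.Q.1 then 0 else if S.P.1 < S.Q.1 then -1 else 1

/-- `σ(S)` for a top-polygon segment (endpoints ordered by increasing abscissa). -/
def sigmaT (S : Seg) : ℤ :=
  if S.P.2 = S.Q.2 then 0 else if S.P.2 < S.Q.2 then -1 else 1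

/-- `|S₁|`, the length of the projection of `S` on the horizontal axis. -/
def len1 (S : Seg) : ℚ := |(S.Q.1 : ℚ) - S.P.1|

/-- `|S₂|`, the length of the projection of `S` on the vertical axis. -/
def len2 (S : Seg) : ℚ := |(S.Q.2 : ℚ) - S.P.2|

/-- the declivity `(|S₁|/|S₂|)·σ(S)` of a right-polygon segment. -/
def decl (S : Seg) : ℚ := len1 S / len2 S * (sigmaR S : ℚ)

/-- the declivity `(|S₂|/|S₁|)·σ(S)` of a top-polygon segment. -/
def tdecl (S : Seg) : ℚ := len2 S / len1 S * (sigmaT S : ℚ)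

/-- `α(S)`: the abscissa of the intersection of the line through `S` with the
horizontal axis. -/
def alphaS (S : Seg) : ℚ := (S.P.1 : ℚ) + (S.P.2 : ℚ) * decl S

/-- `β(S)`: the ordinate of the intersection of the line through `S` with the
vertical axis. -/
def betaS (S : Seg) : ℚ := (S.P.2 : ℚ) + (S.P.1 : ℚ) * tdecl S

/-- a right-polygon segment is exceptional if it joins the horizontal axis with a
point of the form `(p, 1)`. -/
def RExcep (S : Seg) : Prop := S.P.2 = 0 ∧ S.Q.2 = 1

/-- a top-polygon segment is exceptional if it joins the vertical axis with a
point of the form `(1, q)`. -/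
def TExcep (S : Seg) : Prop := S.P.1 = 0 ∧ S.Q.1 = 1

/-- `in(h,S)`: the sum of the monomials of `h` supported on the segment `S`. -/
def inPoly (h : MvPolynomial (Fin 2) ℂ) (S : Seg) : MvPolynomial (Fin 2) ℂ :=
  ∑ p ∈ (supp h).filter (OnSeg S),
    MvPolynomial.monomial (Finsupp.single 0 p.1 + Finsupp.single 1 p.2) (coeff2 h p)

/-!
Take the highest row `β = B` of the support and its rightmost point `Q`. If some support point
lies strictly below, rotating a line about `Q` until it meets the lower points (choosing the
lowest of the points it meets) produces a right Newton segment ending at `Q`, so the top of the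
right Newton polygon is at height `B`. Hence if the right polygon is empty or exceptional and
`Y² ∤ h`, every exponent of `Y` is at most `1`; by the symmetry `X ↔ Y` the same holds for `X`.
With no constant term, `h = aX + bY + cXY`, and if `c = 0` the non-vanishing partial
derivatives are `a` and `b`.
-/

def IsRightSeg (A : Finset (ℕ × ℕ)) (S : Seg) : Prop :=
  S.P ∈ A ∧ S.Q ∈ A ∧ S.P.2 < S.Q.2 ∧
  (∀ v ∈ A, lfun S v ≤ lfun S S.P) ∧
  (∀ v ∈ A, lfun S v = lfun S S.P → S.P.2 ≤ v.2 ∧ v.2 ≤ S.Q.2)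

def invSlope (Q v : ℕ × ℕ) : ℚ := ((v.1 : ℚ) - Q.1) / ((Q.2 : ℚ) - v.2)

lemma lfun_sub_lfun_eq_mul_invSlope_sub {S : Seg} {v : ℕ × ℕ} (hP : S.P.2 < S.Q.2)
    (hv : v.2 < S.Q.2) :
    ((lfun S v - lfun S S.P : ℤ) : ℚ) =
      ((S.Q.2 : ℚ) - S.P.2) * ((S.Q.2 : ℚ) - v.2) * (invSlope S.Q v - invSlope S.Q S.P) := by
  have hP' : (S.Q.2 : ℚ) - S.P.2 ≠ 0 := sub_ne_zero.2 (by exact_mod_cast hP.ne')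
  have hv' : (S.Q.2 : ℚ) - v.2 ≠ 0 := sub_ne_zero.2 (by exact_mod_cast hv.ne')
  unfold lfun invSlope
  field_simp
  push_cast
  ring

lemma lfun_sub_lfun_of_snd_eq {S : Seg} {v : ℕ × ℕ} (hv : v.2 = S.Q.2) :
    lfun S v - lfun S S.P = ((S.Q.2 : ℤ) - S.P.2) * ((v.1 : ℤ) - S.Q.1) := by
  unfold lfun
  rw [hv]
  ring

theorem exists_isRightSeg_of_snd_lt {A : Finset (ℕ × ℕ)} {v w : ℕ × ℕ} (hv : v ∈ A)
    (hw : w ∈ A) (hvw : v.2 < w.2) : ∃ S, IsRightSeg A S ∧ w.2 ≤ S.Q.2 := by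
  -- `Q`: rightmost point of the top row; `P`: among lower points, a lowest one maximizing the
  -- inverse slope of `PQ`.
  obtain ⟨Q₀, hQ₀, hQ₀max⟩ := A.exists_max_image Prod.snd ⟨w, hw⟩
  obtain ⟨Q, hQ, hQmax⟩ :=
    (A.filter (·.2 = Q₀.2)).exists_max_image Prod.fst ⟨Q₀, by simp [hQ₀]⟩
  rw [Finset.mem_filter] at hQ
  have hA : ∀ u ∈ A, u.2 ≤ Q.2 := hQ.2 ▸ hQ₀max
  set V := A.filter (·.2 < Q.2)
  have hvV : v ∈ V := Finset.mem_filter.2 ⟨hv, by linarith [hA w hw]⟩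
  obtain ⟨P₀, hP₀, hP₀max⟩ := V.exists_max_image (invSlope Q) ⟨v, hvV⟩
  obtain ⟨P, hP, hPmin⟩ :=
    (V.filter (invSlope Q · = invSlope Q P₀)).exists_min_image Prod.snd ⟨P₀, by simp [hP₀]⟩
  simp only [V, Finset.mem_filter] at hP hP₀max hPmin
  obtain ⟨⟨hPA, hPQ⟩, hPslope⟩ := hP
  have hPQ' : (0 : ℚ) < (Q.2 : ℚ) - P.2 := sub_pos.2 (by exact_mod_cast hPQ)
  have key (u : ℕ × ℕ) (hu : u.2 < Q.2) :
      ((lfun ⟨P, Q⟩ u - lfun ⟨P, Q⟩ P : ℤ) : ℚ) =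
        ((Q.2 : ℚ) - P.2) * ((Q.2 : ℚ) - u.2) * (invSlope Q u - invSlope Q P) :=
    lfun_sub_lfun_eq_mul_invSlope_sub hPQ hu
  refine ⟨⟨P, Q⟩, ⟨hPA, hQ.1, hPQ, fun u hu => ?_, fun u hu hlfun => ⟨?_, hA u hu⟩⟩,
    (hQ₀max w hw).trans_eq hQ.2.symm⟩
  · rcases (hA u hu).lt_or_eq with hlt | heq
    · have hu' : (0 : ℚ) < (Q.2 : ℚ) - u.2 := sub_pos.2 (by exact_mod_cast hlt)
      have : ((lfun ⟨P, Q⟩ u - lfun ⟨P, Q⟩ P : ℤ) : ℚ) ≤ 0 := by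
        rw [key u hlt]
        exact mul_nonpos_of_nonneg_of_nonpos (by positivity)
          (by linarith [hP₀max u ⟨hu, hlt⟩])
      exact sub_nonpos.1 (by exact_mod_cast this)
    · have hu1 : u.1 ≤ Q.1 := hQmax u (Finset.mem_filter.2 ⟨hu, heq.trans hQ.2⟩)
      have := lfun_sub_lfun_of_snd_eq (S := ⟨P, Q⟩) heq
      nlinarith
  · rcases (hA u hu).lt_or_eq with hlt | heq
    · have hu' : (0 : ℚ) < (Q.2 : ℚ) - u.2 := sub_pos.2 (by exact_mod_cast hlt)
      have := key u hlt
      rw [hlfun, sub_self, Int.cast_zero, eq_comm] at this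
      refine hPmin u ⟨⟨hu, hlt⟩, ?_⟩
      rw [← hPslope]
      simpa [sub_eq_zero, hPQ'.ne', hu'.ne'] using this
    · exact heq ▸ hPQ.le

theorem snd_le_of_forall_isRightSeg {A : Finset (ℕ × ℕ)} {k : ℕ}
    (hA : ∀ S, IsRightSeg A S → S.Q.2 ≤ k) (hlow : ∃ v ∈ A, v.2 ≤ k) : ∀ w ∈ A, w.2 ≤ k := by
  obtain ⟨v, hv, hvk⟩ := hlow
  intro w hw
  by_contra! hwk
  obtain ⟨S, hS, hwS⟩ := exists_isRightSeg_of_snd_lt hv hw (hvk.trans_lt hwk)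
  exact absurd (hA S hS) (by omega)

lemma topSeg_of_isRightSeg_image_swap {h : MvPolynomial (Fin 2) ℂ} {P Q : ℕ × ℕ}
    (hS : IsRightSeg ((supp h).image Prod.swap) ⟨P.swap, Q.swap⟩) : TopSeg h ⟨P, Q⟩ := by
  obtain ⟨hP, hQ, hPQ, hsupport, hface⟩ := hS
  rw [Prod.swap_injective.mem_finset_image] at hP hQ
  exact ⟨hP, hQ, hPQ, fun v hv => hsupport v.swap (Finset.mem_image_of_mem _ hv),
    fun v hv hg => hface v.swap (Finset.mem_image_of_mem _ hv) hg⟩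

open MvPolynomial

section
variable {R : Type*} [CommSemiring R]

lemma exists_mem_support_lt_of_not_X_pow_dvd {σ : Type*} {i : σ} {n : ℕ}
    {p : MvPolynomial σ R} (hp : ¬ X i ^ n ∣ p) : ∃ d ∈ p.support, d i < n := by
  contrapose! hp
  rw [← p.support_sum_monomial_coeff]
  refine Finset.dvd_sum fun d hd => ⟨monomial (d - Finsupp.single i n) (coeff d p), ?_⟩
  rw [X_pow_eq_monomial, monomial_mul, one_mul,
    add_tsub_cancel_of_le (Finsupp.single_le_iff.2 (hp d hd))]

theorem eq_bilinear_of_exponents_le_one (p : MvPolynomial (Fin 2) R) (h0 : coeff 0 p = 0)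
    (hp : ∀ d ∈ p.support, d 0 ≤ 1 ∧ d 1 ≤ 1) :
    p = C (coeff (Finsupp.single 0 1) p) * X 0 + C (coeff (Finsupp.single 1 1) p) * X 1 +
      C (coeff (Finsupp.single 0 1 + Finsupp.single 1 1) p) * (X 0 * X 1) := by
  ext d
  have hd : d = Finsupp.single 0 (d 0) + Finsupp.single 1 (d 1) := by
    ext i; fin_cases i <;> simp
  simp only [coeff_add, coeff_C_mul, X, monomial_mul, one_mul, coeff_monomial]
  by_cases hs : d ∈ p.support
  · obtain ⟨h0d, h1d⟩ := hp d hs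
    rw [hd] at hs ⊢
    interval_cases d 0 <;> interval_cases d 1 <;> simp_all [Finsupp.single_eq_single_iff]
  · have hvanish (e : Fin 2 →₀ ℕ) : coeff e p * (if e = d then 1 else 0) = 0 := by
      split_ifs with he
      · rwa [he, mul_one, ← notMem_support_iff]
      · exact mul_zero _
    simp only [hvanish, notMem_support_iff.1 hs, add_zero]

lemma bilinear_coeffs_ne_zero_of_pderiv_ne_zero [NoZeroDivisors R] {a b c : R}
    (h0 : pderiv 0 (C a * X 0 + C b * X 1 + C c * (X 0 * X 1) : MvPolynomial (Fin 2) R) ≠ 0)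
    (h1 : pderiv 1 (C a * X 0 + C b * X 1 + C c * (X 0 * X 1) : MvPolynomial (Fin 2) R) ≠ 0) :
    a * b ≠ 0 ∨ c ≠ 0 := by
  by_cases hc : c = 0
  · subst hc
    exact Or.inl (mul_ne_zero (by simpa using h0) (by simpa using h1))
  · exact Or.inr hc

end

/-- Proposition 2.2: if `h` has no constant term, both partial derivatives are non-zero,
`h` is divisible neither by `X²` nor by `Y²`, and each of the right and top Newton
polygons is empty or consists only of its exceptional segment, then
`h = aX + bY + cXY` with `ab ≠ 0` or `c ≠ 0`. -/
theorem stmt8 (h : MvPolynomial (Fin 2) ℂ)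
    (h00 : MvPolynomial.coeff 0 h = 0)
    (hdx : MvPolynomial.pderiv (0 : Fin 2) h ≠ 0)
    (hdy : MvPolynomial.pderiv (1 : Fin 2) h ≠ 0)
    (hX2 : ¬ (MvPolynomial.X 0 ^ 2 ∣ h))
    (hY2 : ¬ (MvPolynomial.X 1 ^ 2 ∣ h))
    (hr : ∀ S : Seg, RightSeg h S → RExcep S)
    (ht : ∀ S : Seg, TopSeg h S → TExcep S) :
    ∃ a b c : ℂ,
      h = MvPolynomial.C a * MvPolynomial.X 0 + MvPolynomial.C b * MvPolynomial.X 1 +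
          MvPolynomial.C c * (MvPolynomial.X 0 * MvPolynomial.X 1) ∧
      (a * b ≠ 0 ∨ c ≠ 0) := by
  have hY : ∀ v ∈ supp h, v.2 ≤ 1 := by
    refine snd_le_of_forall_isRightSeg (fun S hS => (hr S hS).2.le) ?_
    obtain ⟨d, hd, hd1⟩ := exists_mem_support_lt_of_not_X_pow_dvd hY2
    exact ⟨(d 0, d 1), Finset.mem_image_of_mem _ hd, Nat.lt_succ_iff.1 hd1⟩
  have hX : ∀ v ∈ (supp h).image Prod.swap, v.2 ≤ 1 := by
    refine snd_le_of_forall_isRightSeg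
      (fun ⟨P, Q⟩ hS => (ht ⟨P.swap, Q.swap⟩ (topSeg_of_isRightSeg_image_swap hS)).2.le) ?_
    obtain ⟨d, hd, hd0⟩ := exists_mem_support_lt_of_not_X_pow_dvd hX2
    exact ⟨(d 1, d 0), Finset.mem_image_of_mem _ (Finset.mem_image_of_mem _ hd),
      Nat.lt_succ_iff.1 hd0⟩
  have hh := eq_bilinear_of_exponents_le_one h h00 fun d hd =>
    ⟨hX _ (Finset.mem_image_of_mem _ (Finset.mem_image_of_mem _ hd)),
      hY _ (Finset.mem_image_of_mem _ hd)⟩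
  exact ⟨_, _, _, hh, bilinear_coeffs_ne_zero_of_pderiv_ne_zero (hh ▸ hdx) (hh ▸ hdy)⟩
end
end

section
/- Let h ∈ ℂ[X,Y] be non-zero and let S be a segment of the right Newton polygon of h. If θ is a rational number and c a non-zero complex number with in(h,S)(X, cX^θ) = 0 (as an identity of Puiseux/Laurent expressions), then θ = (|S₁|/|S₂|)·σ(S), i.e. θ equals the declivity of S. -/
open scoped Classical

noncomputable section

/-!
If `θ` differs from the declivity of `S`, the weight `α + θβ` is injective on the line through
`S`. The coefficient of `X^m` in `in(h,S)(X, cX^θ)`, for `m` the weight of the endpoint `S.P`,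
is then the single term `h_{S.P} c^{β(S.P)}`, which is nonzero.
-/

lemma decl_eq_div_of_lt (S : Seg) (hPQ : S.P.2 < S.Q.2) :
    decl S = ((S.P.1 : ℚ) - S.Q.1) / ((S.Q.2 : ℚ) - S.P.2) := by
  have hq : (S.P.2 : ℚ) < S.Q.2 := by exact_mod_cast hPQ
  unfold decl len1 len2 sigmaR
  rw [abs_of_pos (sub_pos.mpr hq)]
  rcases lt_trichotomy S.P.1 S.Q.1 with h1 | h1 | h1
  · have hq1 : (S.P.1 : ℚ) < S.Q.1 := by exact_mod_cast h1
    rw [if_neg h1.ne, if_pos h1, abs_of_pos (sub_pos.mpr hq1)]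
    field_simp
    push_cast
    ring
  · simp [h1]
  · have hq1 : (S.Q.1 : ℚ) < S.P.1 := by exact_mod_cast h1
    rw [if_neg h1.ne', if_neg h1.not_gt, abs_of_neg (sub_neg.mpr hq1)]
    field_simp
    push_cast
    ring

lemma eq_of_lfun_eq_of_weight_eq {S : Seg} (hPQ : S.P.2 < S.Q.2) {θ : ℚ} (hθ : θ ≠ decl S)
    {v w : ℕ × ℕ} (hl : lfun S v = lfun S w)
    (hweight : (v.1 : ℚ) + θ * v.2 = w.1 + θ * w.2) : v = w := by
  have hq : (S.P.2 : ℚ) < S.Q.2 := by exact_mod_cast hPQ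
  have hslope : ((S.Q.2 : ℚ) - S.P.2) * θ + ((S.Q.1 : ℚ) - S.P.1) ≠ 0 := by
    intro hk
    apply hθ
    rw [decl_eq_div_of_lt S hPQ, eq_div_iff (sub_pos.mpr hq).ne']
    linear_combination hk
  have hlQ : ((S.Q.2 : ℚ) - S.P.2) * v.1 - ((S.Q.1 : ℚ) - S.P.1) * v.2
      = ((S.Q.2 : ℚ) - S.P.2) * w.1 - ((S.Q.1 : ℚ) - S.P.1) * w.2 := by
    unfold lfun at hl
    exact_mod_cast hl
  have h2 : (v.2 : ℚ) = w.2 := by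
    have hz : ((v.2 : ℚ) - w.2) * (((S.Q.2 : ℚ) - S.P.2) * θ + ((S.Q.1 : ℚ) - S.P.1)) = 0 := by
      linear_combination ((S.Q.2 : ℚ) - S.P.2) * hweight - hlQ
    exact sub_eq_zero.mp ((mul_eq_zero.mp hz).resolve_right hslope)
  have h1 : (v.1 : ℚ) = w.1 := by
    rw [h2] at hweight
    linarith
  exact Prod.ext (by exact_mod_cast h1) (by exact_mod_cast h2)

lemma coeff2_ne_zero_of_mem_supp {h : MvPolynomial (Fin 2) ℂ} {p : ℕ × ℕ} (hp : p ∈ supp h) :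
    coeff2 h p ≠ 0 := by
  obtain ⟨d, hd, rfl⟩ := Finset.mem_image.mp hp
  have hdd : Finsupp.single 0 (d 0) + Finsupp.single 1 (d 1) = d := by
    ext i
    fin_cases i <;> simp
  rw [coeff2, hdd]
  exact MvPolynomial.mem_support_iff.mp hd

lemma onSeg_P (S : Seg) : OnSeg S S.P :=
  ⟨rfl, min_le_left _ _, le_max_left _ _, min_le_left _ _, le_max_left _ _⟩

/-- `hzero` states `in(h,S)(X, cX^θ) = 0` coefficientwise: the coefficient of `X^m` is
`∑_{(α,β)∈S, α+θβ=m} h_{αβ} c^β`. -/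
theorem stmt11_general (h : MvPolynomial (Fin 2) ℂ) (S : Seg) (hS : RightSeg h S)
    (θ : ℚ) (c : ℂ) (hc : c ≠ 0)
    (hzero : ∀ m : ℚ,
      ∑ p ∈ (supp h).filter (fun p => OnSeg S p ∧ (p.1 : ℚ) + θ * (p.2 : ℚ) = m),
        coeff2 h p * c ^ p.2 = 0) :
    θ = decl S := by
  by_contra hθ
  obtain ⟨hP, -, hPQ, -, -⟩ := hS
  have hsingle : (supp h).filter
      (fun p => OnSeg S p ∧ (p.1 : ℚ) + θ * (p.2 : ℚ) = (S.P.1 : ℚ) + θ * (S.P.2 : ℚ))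
      = {S.P} := by
    refine Finset.eq_singleton_iff_unique_mem.mpr
      ⟨Finset.mem_filter.mpr ⟨hP, onSeg_P S, rfl⟩, fun p hp => ?_⟩
    obtain ⟨-, ⟨hl, -⟩, hweight⟩ := Finset.mem_filter.mp hp
    exact eq_of_lfun_eq_of_weight_eq hPQ hθ hl hweight
  have hPcoeff := hzero ((S.P.1 : ℚ) + θ * (S.P.2 : ℚ))
  rw [hsingle, Finset.sum_singleton] at hPcoeff
  exact mul_ne_zero (coeff2_ne_zero_of_mem_supp hP) (pow_ne_zero _ hc) hPcoeff

/-- Proposition 6.1(b): if `S` is a segment of the right Newton polygon of `h ≠ 0`,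
`θ ∈ ℚ`, `c ≠ 0`, and `in(h,S)(X, cX^θ) = 0` as an identity of Puiseux expressions
(i.e. for every exponent `m`, the coefficient `∑_{(α,β)∈S, α+θβ=m} h_{αβ} c^β` of `X^m`
vanishes), then `θ = (|S₁|/|S₂|)·σ(S)`, the declivity of `S`. -/
theorem stmt11 (h : MvPolynomial (Fin 2) ℂ) (h0 : h ≠ 0) (S : Seg) (hS : RightSeg h S)
    (θ : ℚ) (c : ℂ) (hc : c ≠ 0)
    (hzero : ∀ m : ℚ,
      ∑ p ∈ (supp h).filter (fun p => OnSeg S p ∧ (p.1 : ℚ) + θ * (p.2 : ℚ) = m),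
        coeff2 h p * c ^ p.2 = 0) :
    θ = decl S :=
  stmt11_general h S hS θ c hc hzero
end
end

section
/- Let h ∈ ℂ[X,Y] be non-zero, let a(X) be a non-zero Laurent–Puiseux series in 1/X of degree θ, and set m = max{α + θβ : (α,β) ∈ supp h}. Then deg h(X, a(X)) ≤ m, and the inequality is strict if and only if there exists a segment S of the right Newton polygon of h such that in(h,S)(X, a⁺(X)) = 0, where a⁺(X) is the leading term of a(X). -/
open scoped Classical

noncomputable section

/-! Laurent–Puiseux series in `1/X` are modelled as Hahn series over `ℚᵒᵈ`:
formal series `∑ a_θ X^θ` with complex coefficients whose rational exponents form a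
set that is well-ordered downwards (in particular bounded above); this field contains
`ℂ((1/X))* = ⋃_k ℂ((X^(−1/k)))` and is algebraically closed. -/
abbrev K : Type := HahnSeries ℚᵒᵈ ℂ

/-- the degree of a Laurent–Puiseux series: its largest exponent. -/
def degLP (a : K) : ℚ := OrderDual.ofDual a.order

/-- `a⁺`, the leading term of a Laurent–Puiseux series. -/
def lead (a : K) : K := HahnSeries.single a.order a.leadingCoeff

/-- `X^θ` as a Laurent–Puiseux series. -/
def XpowQ (θ : ℚ) : K := HahnSeries.single (OrderDual.toDual θ) 1

/-- the substitution `h(X, a(X))` of a Laurent–Puiseux series for `Y` in `h`. -/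
def substY (h : MvPolynomial (Fin 2) ℂ) (a : K) : K :=
  ∑ p ∈ supp h,
    (HahnSeries.single (OrderDual.toDual (p.1 : ℚ)) (coeff2 h p) : K) * a ^ p.2

/-- the substitution `in(h,S)(X, a(X))` of a Laurent–Puiseux series for `Y` in `in(h,S)`. -/
def inSub (h : MvPolynomial (Fin 2) ℂ) (S : Seg) (a : K) : K :=
  ∑ p ∈ (supp h).filter (OnSeg S),
    (HahnSeries.single (OrderDual.toDual (p.1 : ℚ)) (coeff2 h p) : K) * a ^ p.2

/-! Substituting `Y = a(X)` turns the monomial `h_{αβ} X^α Y^β` into a series of degree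
`α + θβ` with leading coefficient `h_{αβ} c^β`, where `a⁺ = c X^θ`. So no exponent exceeds `m`,
and the coefficient at `X^m` is `F = ∑ h_{αβ} c^β` over the support points on the supporting
line `α + θβ = m`. If `F = 0` there are at least two such points, and the extreme ones span a
segment `S` of the right Newton polygon with `in(h,S)(X, a⁺) = F X^m = 0`. Conversely, if a
right segment `S` is not parallel to the lines `α + θβ = const`, the monomials of
`in(h,S)(X, a⁺)` have pairwise distinct degrees, so it does not vanish; if it is parallel, it
lies on the supporting line and `in(h,S)(X, a⁺) = F X^m`. -/

open HahnSeries OrderDual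

theorem HahnSeries.leadingCoeff_pow {Γ R : Type*} [AddCommMonoid Γ] [LinearOrder Γ]
    [IsOrderedCancelAddMonoid Γ] [Semiring R] [NoZeroDivisors R] (x : HahnSeries Γ R) (n : ℕ) :
    (x ^ n).leadingCoeff = x.leadingCoeff ^ n := by
  induction n with
  | zero => simp
  | succ n ih => rw [pow_succ, leadingCoeff_mul, ih, pow_succ]

theorem mem_supp_iff {h : MvPolynomial (Fin 2) ℂ} {p : ℕ × ℕ} :
    p ∈ supp h ↔ coeff2 h p ≠ 0 := by
  constructor
  · intro hp
    obtain ⟨d, hd, rfl⟩ := Finset.mem_image.mp hp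
    have hd_eq : d = Finsupp.single 0 (d 0) + Finsupp.single 1 (d 1) := by
      ext i; fin_cases i <;> simp
    rw [coeff2, ← hd_eq]
    exact MvPolynomial.mem_support_iff.mp hd
  · intro hc
    exact Finset.mem_image.mpr ⟨_, MvPolynomial.mem_support_iff.mpr hc, by simp⟩

def weight (θ : ℚ) (p : ℕ × ℕ) : ℚ := p.1 + θ * p.2

def face (h : MvPolynomial (Fin 2) ℂ) (θ m : ℚ) : Finset (ℕ × ℕ) :=
  (supp h).filter fun p => weight θ p = m

section Substitution

variable {h : MvPolynomial (Fin 2) ℂ} {a : K} {m : ℚ}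

theorem toDual_add_nsmul_order (a : K) (α : ℚ) (n : ℕ) :
    toDual α + n • a.order = toDual (α + degLP a * n) := by
  rw [mul_comm, ← nsmul_eq_mul]
  rfl

theorem order_single_mul_pow (ha : a ≠ 0) {x : ℂ} (hx : x ≠ 0) (α : ℚ) (n : ℕ) :
    (single (toDual α) x * a ^ n).order = toDual (α + degLP a * n) := by
  rw [order_mul (single_ne_zero hx) (pow_ne_zero _ ha), order_single hx, order_pow,
    toDual_add_nsmul_order]

theorem coeff_single_mul_pow_of_lt (ha : a ≠ 0) (x : ℂ) {α q : ℚ} (n : ℕ)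
    (hq : α + degLP a * n < q) : (single (toDual α) x * a ^ n).coeff (toDual q) = 0 := by
  rcases eq_or_ne x 0 with rfl | hx
  · simp
  · exact coeff_eq_zero_of_lt_order (by rwa [order_single_mul_pow ha hx, toDual_lt_toDual])

theorem coeff_single_mul_pow_self (ha : a ≠ 0) (x : ℂ) (α : ℚ) (n : ℕ) :
    (single (toDual α) x * a ^ n).coeff (toDual (α + degLP a * n)) =
      x * a.leadingCoeff ^ n := by
  rcases eq_or_ne x 0 with rfl | hx
  · simp
  · rw [← order_single_mul_pow ha hx, ← leadingCoeff_eq, leadingCoeff_mul, leadingCoeff_pow,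
      leadingCoeff_of_single]

theorem coeff_substY_of_lt (ha : a ≠ 0) (hub : ∀ p ∈ supp h, weight (degLP a) p ≤ m)
    {q : ℚ} (hq : m < q) : (substY h a).coeff (toDual q) = 0 := by
  rw [substY, coeff_sum]
  exact Finset.sum_eq_zero fun p hp => coeff_single_mul_pow_of_lt ha _ _ ((hub p hp).trans_lt hq)

theorem coeff_substY_eq_sum_face (ha : a ≠ 0) (hub : ∀ p ∈ supp h, weight (degLP a) p ≤ m) :
    (substY h a).coeff (toDual m) =
      ∑ p ∈ face h (degLP a) m, coeff2 h p * a.leadingCoeff ^ p.2 := by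
  have hbelow : ∑ p ∈ (supp h).filter (fun p => weight (degLP a) p ≠ m),
      (single (toDual (p.1 : ℚ)) (coeff2 h p) * a ^ p.2).coeff (toDual m) = 0 :=
    Finset.sum_eq_zero fun p hp => by
      obtain ⟨hp, hne⟩ := Finset.mem_filter.mp hp
      exact coeff_single_mul_pow_of_lt ha _ _ ((hub p hp).lt_of_ne hne)
  rw [substY, coeff_sum, ← Finset.sum_filter_add_sum_filter_not _ (fun p => weight _ p = m),
    hbelow, add_zero]
  refine Finset.sum_congr rfl fun p hp => ?_
  rw [← (Finset.mem_filter.mp hp).2]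
  exact coeff_single_mul_pow_self ha _ _ _

theorem inSub_lead (S : Seg) :
    inSub h S (lead a) = ∑ p ∈ (supp h).filter (OnSeg S),
      single (toDual (weight (degLP a) p)) (coeff2 h p * a.leadingCoeff ^ p.2) := by
  refine Finset.sum_congr rfl fun p _ => ?_
  rw [lead, single_pow, single_mul_single, toDual_add_nsmul_order]
  rfl

end Substitution

section Geometry

variable {θ : ℚ} {S : Seg}

theorem eq_of_weight_eq_of_snd_eq {p q : ℕ × ℕ} (hw : weight θ p = weight θ q)
    (h2 : p.2 = q.2) : p = q := by
  have h1 : (p.1 : ℚ) = q.1 := by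
    simp only [weight, h2] at hw
    linarith
  exact Prod.ext (by exact_mod_cast h1) h2

theorem lfun_eq_mul_weight (hw : weight θ S.Q = weight θ S.P) (v : ℕ × ℕ) :
    (lfun S v : ℚ) = ((S.Q.2 : ℚ) - S.P.2) * weight θ v := by
  simp only [lfun, weight] at *
  push_cast
  linear_combination (-(v.2 : ℚ)) * hw

theorem lfun_le_lfun_iff (hw : weight θ S.Q = weight θ S.P) (hlt : S.P.2 < S.Q.2)
    (v : ℕ × ℕ) : lfun S v ≤ lfun S S.P ↔ weight θ v ≤ weight θ S.P := by
  have hD : (0 : ℚ) < S.Q.2 - S.P.2 := sub_pos.mpr (by exact_mod_cast hlt)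
  rw [← Int.cast_le (R := ℚ), lfun_eq_mul_weight hw, lfun_eq_mul_weight hw,
    mul_le_mul_iff_right₀ hD]

theorem lfun_eq_lfun_iff (hw : weight θ S.Q = weight θ S.P) (hlt : S.P.2 < S.Q.2)
    (v : ℕ × ℕ) : lfun S v = lfun S S.P ↔ weight θ v = weight θ S.P := by
  have hD : (0 : ℚ) < S.Q.2 - S.P.2 := sub_pos.mpr (by exact_mod_cast hlt)
  rw [← Int.cast_inj (α := ℚ), lfun_eq_mul_weight hw, lfun_eq_mul_weight hw,
    mul_right_inj' hD.ne']

theorem weight_eq_of_lfun_eq {v : ℕ × ℕ} (hl : lfun S v = lfun S S.P)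
    (hw : weight θ v = weight θ S.P) (hne : v ≠ S.P) : weight θ S.Q = weight θ S.P := by
  have h2 : (v.2 : ℚ) - S.P.2 ≠ 0 :=
    sub_ne_zero.mpr fun h => hne (eq_of_weight_eq_of_snd_eq hw (by exact_mod_cast h))
  have hl' : (lfun S v : ℚ) = lfun S S.P := by exact_mod_cast hl
  simp only [lfun, weight] at hl' hw ⊢
  push_cast at hl'
  apply mul_left_cancel₀ h2
  linear_combination (-1 : ℚ) * hl' + ((S.Q.2 : ℚ) - S.P.2) * hw

theorem rightSeg_iff_of_weight_eq {h : MvPolynomial (Fin 2) ℂ}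
    (hw : weight θ S.Q = weight θ S.P) :
    RightSeg h S ↔ S.P ∈ supp h ∧ S.Q ∈ supp h ∧ S.P.2 < S.Q.2 ∧
      (∀ v ∈ supp h, weight θ v ≤ weight θ S.P) ∧
      (∀ v ∈ supp h, weight θ v = weight θ S.P → S.P.2 ≤ v.2 ∧ v.2 ≤ S.Q.2) := by
  refine and_congr_right fun _ => and_congr_right fun _ => and_congr_right fun hlt => ?_
  simp only [lfun_le_lfun_iff hw hlt, lfun_eq_lfun_iff hw hlt]

theorem filter_onSeg_eq_face {h : MvPolynomial (Fin 2) ℂ} (hS : RightSeg h S)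
    (hw : weight θ S.Q = weight θ S.P) :
    (supp h).filter (OnSeg S) = face h θ (weight θ S.P) := by
  obtain ⟨-, -, hlt, -, hbetween⟩ := (rightSeg_iff_of_weight_eq hw).mp hS
  ext v
  simp only [face, Finset.mem_filter, and_congr_right_iff]
  intro hv
  refine ⟨fun hon => (lfun_eq_lfun_iff hw hlt v).mp hon.1, fun hvw => ?_⟩
  obtain ⟨hP2, hQ2⟩ := hbetween v hv hvw
  have hP2' : (S.P.2 : ℚ) ≤ v.2 := by exact_mod_cast hP2
  have hQ2' : (v.2 : ℚ) ≤ S.Q.2 := by exact_mod_cast hQ2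
  have hv1 : (S.Q.1 : ℚ) ≤ v.1 ∧ (v.1 : ℚ) ≤ S.P.1 ∨ (S.P.1 : ℚ) ≤ v.1 ∧ (v.1 : ℚ) ≤ S.Q.1 := by
    simp only [weight] at hw hvw
    rcases le_total 0 θ with hθ | hθ
    · exact Or.inl ⟨by nlinarith, by nlinarith⟩
    · exact Or.inr ⟨by nlinarith, by nlinarith⟩
  norm_cast at hv1
  exact ⟨(lfun_eq_lfun_iff hw hlt v).mpr hvw, by omega, by omega, by omega, by omega⟩

end Geometry

section NewtonPolygon

variable {h : MvPolynomial (Fin 2) ℂ} {S : Seg} {a : K}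

theorem inSub_lead_eq_single (hS : RightSeg h S)
    (hw : weight (degLP a) S.Q = weight (degLP a) S.P) :
    inSub h S (lead a) = single (toDual (weight (degLP a) S.P))
      (∑ p ∈ face h (degLP a) (weight (degLP a) S.P), coeff2 h p * a.leadingCoeff ^ p.2) := by
  rw [inSub_lead, filter_onSeg_eq_face hS hw]
  refine (Finset.sum_congr rfl fun p hp => ?_).trans (map_sum (single.addMonoidHom _) _ _).symm
  rw [(Finset.mem_filter.mp hp).2]
  rfl

theorem weight_eq_of_inSub_lead_eq_zero (ha : a ≠ 0) (hS : RightSeg h S)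
    (hz : inSub h S (lead a) = 0) : weight (degLP a) S.Q = weight (degLP a) S.P := by
  by_contra hw
  have hP : S.P ∈ (supp h).filter (OnSeg S) := Finset.mem_filter.mpr
    ⟨hS.1, rfl, min_le_left _ _, le_max_left _ _, min_le_left _ _, le_max_left _ _⟩
  have hcoeff := congrArg (coeff · (toDual (weight (degLP a) S.P))) hz
  rw [inSub_lead, coeff_sum, Finset.sum_eq_single_of_mem S.P hP, coeff_single_same,
    coeff_zero] at hcoeff
  · exact mul_ne_zero (mem_supp_iff.mp hS.1) (pow_ne_zero _ (leadingCoeff_ne_zero.mpr ha)) hcoeff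
  · intro p hp hne
    exact coeff_single_of_ne fun he =>
      hw (weight_eq_of_lfun_eq (Finset.mem_filter.mp hp).2.1 (toDual.injective he).symm hne)

/-- A vanishing face sum needs two support points on the face; the lowest and highest of
them span a segment of the right Newton polygon. -/
theorem exists_rightSeg_of_sum_face_eq_zero {θ m : ℚ} {p₀ : ℕ × ℕ}
    (hub : ∀ p ∈ supp h, weight θ p ≤ m) (hp₀ : p₀ ∈ face h θ m) {c : ℂ} (hc : c ≠ 0)
    (hF : ∑ p ∈ face h θ m, coeff2 h p * c ^ p.2 = 0) :
    ∃ S : Seg, RightSeg h S ∧ weight θ S.Q = weight θ S.P ∧ weight θ S.P = m := by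
  obtain ⟨P, hP, hPmin⟩ := Finset.exists_min_image (face h θ m) Prod.snd ⟨p₀, hp₀⟩
  obtain ⟨Q, hQ, hQmax⟩ := Finset.exists_max_image (face h θ m) Prod.snd ⟨p₀, hp₀⟩
  have hPm := (Finset.mem_filter.mp hP).2
  have hQm := (Finset.mem_filter.mp hQ).2
  have hlt : P.2 < Q.2 := by
    by_contra hle
    have hsingle : face h θ m = {P} := Finset.eq_singleton_iff_unique_mem.mpr ⟨hP, fun p hp =>
      eq_of_weight_eq_of_snd_eq ((Finset.mem_filter.mp hp).2.trans hPm.symm)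
        (le_antisymm ((hQmax p hp).trans (not_lt.mp hle)) (hPmin p hp))⟩
    rw [hsingle, Finset.sum_singleton] at hF
    exact mul_ne_zero (mem_supp_iff.mp (Finset.mem_filter.mp hP).1) (pow_ne_zero _ hc) hF
  have hw : weight θ Q = weight θ P := hQm.trans hPm.symm
  refine ⟨⟨P, Q⟩, (rightSeg_iff_of_weight_eq hw).mpr ⟨(Finset.mem_filter.mp hP).1,
    (Finset.mem_filter.mp hQ).1, hlt, fun v hv => hPm ▸ hub v hv, fun v hv hvw => ?_⟩, hw, hPm⟩
  have hvface : v ∈ face h θ m := Finset.mem_filter.mpr ⟨hv, hvw.trans hPm⟩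
  exact ⟨hPmin v hvface, hQmax v hvface⟩

end NewtonPolygon

theorem stmt12_general (h : MvPolynomial (Fin 2) ℂ) (a : K) (ha : a ≠ 0)
    (θ m : ℚ) (hθ : θ = degLP a)
    (hub : ∀ p ∈ supp h, (p.1 : ℚ) + θ * (p.2 : ℚ) ≤ m)
    (hmax : ∃ p ∈ supp h, (p.1 : ℚ) + θ * (p.2 : ℚ) = m) :
    (∀ q : ℚ, m < q → (substY h a).coeff (OrderDual.toDual q) = 0) ∧
    ((substY h a).coeff (OrderDual.toDual m) = 0 ↔
      ∃ S : Seg, RightSeg h S ∧ inSub h S (lead a) = 0) := by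
  subst hθ
  refine ⟨fun q hq => coeff_substY_of_lt ha hub hq, ?_⟩
  obtain ⟨p₀, hp₀, hp₀m⟩ := hmax
  rw [coeff_substY_eq_sum_face ha hub]
  constructor
  · intro hF
    obtain ⟨S, hS, hw, hPm⟩ := exists_rightSeg_of_sum_face_eq_zero hub
      (Finset.mem_filter.mpr ⟨hp₀, hp₀m⟩) (leadingCoeff_ne_zero.mpr ha) hF
    refine ⟨S, hS, ?_⟩
    rw [inSub_lead_eq_single hS hw, hPm, hF, single_eq_zero]
  · rintro ⟨S, hS, hz⟩
    have hw := weight_eq_of_inSub_lead_eq_zero ha hS hz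
    have hPm : weight (degLP a) S.P = m :=
      le_antisymm (hub _ hS.1) (hp₀m ▸ ((rightSeg_iff_of_weight_eq hw).mp hS).2.2.2.1 p₀ hp₀)
    rwa [inSub_lead_eq_single hS hw, hPm, single_eq_zero_iff] at hz

/-- Estimate (14) and Proposition 6.2: for `h ≠ 0`, a non-zero Laurent–Puiseux series
`a(X)` of degree `θ`, and `m = max{α + θβ : (α,β) ∈ supp h}`:
the substitution `h(X,a(X))` has no exponent above `m`, and its coefficient at `m`
vanishes (i.e. the substitution is non-generic, `deg h(X,a(X)) < m`) iff there is a
segment `S` of the right Newton polygon of `h` with `in(h,S)(X, a⁺(X)) = 0`. -/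
theorem stmt12 (h : MvPolynomial (Fin 2) ℂ) (h0 : h ≠ 0) (a : K) (ha : a ≠ 0)
    (θ m : ℚ) (hθ : θ = degLP a)
    (hub : ∀ p ∈ supp h, (p.1 : ℚ) + θ * (p.2 : ℚ) ≤ m)
    (hmax : ∃ p ∈ supp h, (p.1 : ℚ) + θ * (p.2 : ℚ) = m) :
    (∀ q : ℚ, m < q → (substY h a).coeff (OrderDual.toDual q) = 0) ∧
    ((substY h a).coeff (OrderDual.toDual m) = 0 ↔
      ∃ S : Seg, RightSeg h S ∧ inSub h S (lead a) = 0) :=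
  stmt12_general h a ha θ m hθ hub hmax
end
end
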